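/- arXiv:math/0403501 — 5 statements merged into one kernel-verified Lean document; each statement's English description precedes it below -/
import Mathlib

section
/- Let (X̂, f̂, μ̂) be an invertible ergodic measure-preserving system, ε > 0, and u : X̂ → (0,∞) measurable with log u integrable; set χ := ∫ log u dμ̂. Then there exists a measurable function V₂ : X̂ → [1,∞) that is ε-fast (i.e., there is a measurable S̃ : X̂ → [1,∞) with V₂(f̂^q(x̂)) ≤ e^{qε} S̃(x̂) for μ̂-a.e. x̂ and all q ≥ 1) such that for μ̂-a.e. x̂ and all n ≥ 1, ∏_{j=1}^{n} u(f̂^{-j}(x̂)) ≤ V₂(x̂) e^{n(χ + ε)}. -/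
open MeasureTheory Finset Filter Function Set Topology

/-!
With `L = log u`, the product is `exp` of a backward Birkhoff sum of `L`. Under an ergodic map, an
integrable `φ` with `∫ φ < 0` has Birkhoff sums bounded above almost everywhere: otherwise the
running maxima `M_N = max_{n ≤ N} S_n φ` tend to `∞` a.e., and integrating Garsia's identity
`M_{N+1} - M_N ∘ T = max (-M_N ∘ T) φ` gives `∫ φ ≥ 0` in the limit. So
`V₂ = exp (sup_n (S_n (L ∘ g) - n (χ + ε)))`, with `g = f⁻¹`, is finite a.e. A backward sum from
`f^[q] x` is made of forward sums from `x` (and possibly a backward sum from `x`); applying the same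
bound to `±(L - χ) - ε / 2` along `f` shows that this costs at most a factor `e^{q ε}`.
-/

lemma MeasureTheory.MeasurePreserving.integral_comp_of_aestronglyMeasurable {X Y E : Type*}
    [MeasurableSpace X] [MeasurableSpace Y] [NormedAddCommGroup E] [NormedSpace ℝ E]
    {μ : Measure X} {ν : Measure Y} {T : X → Y} {ψ : Y → E} (hT : MeasurePreserving T μ ν)
    (hψ : AEStronglyMeasurable ψ ν) : ∫ x, ψ (T x) ∂μ = ∫ y, ψ y ∂ν := by
  rw [← integral_map hT.measurable.aemeasurable (by rwa [hT.map_eq]), hT.map_eq]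

lemma abs_max_neg_le_abs {α : Type*} [AddCommGroup α] [LinearOrder α] [IsOrderedAddMonoid α]
    {a b : α} (hb : 0 ≤ b) : |max (-b) a| ≤ |a| :=
  abs_le.2 ⟨(neg_abs_le a).trans (le_max_right _ _),
    max_le ((neg_nonpos.2 hb).trans (abs_nonneg a)) (le_abs_self a)⟩

section MaximalInequality

variable {X : Type*} {T : X → X} {φ : X → ℝ}

-- `birkhoffMax T φ N x = max_{n ≤ N} birkhoffSum T φ n x`, via `S_{n+1} = φ + S_n ∘ T`.
def birkhoffMax (T : X → X) (φ : X → ℝ) : ℕ → X → ℝ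
  | 0 => 0
  | N + 1 => fun x => max 0 (φ x + birkhoffMax T φ N (T x))

lemma birkhoffMax_succ (N : ℕ) (x : X) :
    birkhoffMax T φ (N + 1) x = max 0 (φ x + birkhoffMax T φ N (T x)) := rfl

lemma birkhoffMax_nonneg (N : ℕ) (x : X) : 0 ≤ birkhoffMax T φ N x := by
  cases N with
  | zero => exact le_rfl
  | succ N => exact le_max_left _ _

lemma birkhoffMax_le_succ (N : ℕ) (x : X) : birkhoffMax T φ N x ≤ birkhoffMax T φ (N + 1) x := by
  induction N generalizing x with
  | zero => exact birkhoffMax_nonneg 1 x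
  | succ N ih => exact max_le_max le_rfl (by linarith [ih (T x)])

lemma birkhoffSum_le_birkhoffMax (N : ℕ) (x : X) : birkhoffSum T φ N x ≤ birkhoffMax T φ N x := by
  induction N generalizing x with
  | zero => simp [birkhoffMax]
  | succ N ih =>
    rw [birkhoffSum_succ', birkhoffMax_succ]
    exact le_max_of_le_right (by linarith [ih (T x)])

lemma tendsto_birkhoffMax_atTop (hx : ¬BddAbove (range fun n ↦ birkhoffSum T φ n x)) :
    Tendsto (fun N ↦ birkhoffMax T φ N x) atTop atTop := by
  refine tendsto_atTop_atTop_of_monotone (monotone_nat_of_le_succ fun N ↦ birkhoffMax_le_succ N x)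
    fun b ↦ ?_
  obtain ⟨_, ⟨n, rfl⟩, hn⟩ := not_bddAbove_iff.1 hx b
  exact ⟨n, hn.le.trans (birkhoffSum_le_birkhoffMax n x)⟩

lemma bddAbove_range_birkhoffSum_apply_iff (x : X) :
    BddAbove (range fun n ↦ birkhoffSum T φ n (T x)) ↔
      BddAbove (range fun n ↦ birkhoffSum T φ n x) := by
  simp only [bddAbove_def, forall_mem_range]
  constructor
  · rintro ⟨C, hC⟩
    refine ⟨max 0 (φ x + C), fun n ↦ ?_⟩
    cases n with
    | zero => simp
    | succ n =>
      exact (birkhoffSum_succ' T φ n x).trans_le (le_max_of_le_right (by linarith [hC n]))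
  · rintro ⟨C, hC⟩
    refine ⟨C - φ x, fun n ↦ ?_⟩
    linarith [birkhoffSum_succ' T φ n x, hC (n + 1)]

variable [MeasurableSpace X] {μ : Measure X}

lemma measurable_birkhoffSum (hT : Measurable T) (hφ : Measurable φ) (n : ℕ) :
    Measurable (birkhoffSum T φ n) :=
  Finset.measurable_sum _ fun k _ ↦ hφ.comp (hT.iterate k)

lemma measurable_birkhoffMax (hT : Measurable T) (hφ : Measurable φ) (N : ℕ) :
    Measurable (birkhoffMax T φ N) := by
  induction N with
  | zero => exact measurable_const
  | succ N ih => exact measurable_const.max (hφ.add (ih.comp hT))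

lemma integrable_birkhoffMax (hT : MeasurePreserving T μ μ) (hφ : Integrable φ μ) (N : ℕ) :
    Integrable (birkhoffMax T φ N) μ := by
  induction N with
  | zero => exact integrable_zero _ _ _
  | succ N ih => exact (integrable_zero _ _ _).sup (hφ.add (hT.integrable_comp_of_integrable ih))

-- Garsia's telescoping: `max (-M_N ∘ T) φ = M_{N+1} - M_N ∘ T` and `M_N ≤ M_{N+1}`.
lemma integral_max_neg_birkhoffMax_comp_nonneg (hT : MeasurePreserving T μ μ)
    (hφ : Integrable φ μ) (N : ℕ) : 0 ≤ ∫ x, max (-birkhoffMax T φ N (T x)) (φ x) ∂μ := by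
  have hM := integrable_birkhoffMax hT hφ
  have htele : (fun x ↦ max (-birkhoffMax T φ N (T x)) (φ x)) =
      fun x ↦ birkhoffMax T φ (N + 1) x - birkhoffMax T φ N (T x) := by
    ext x
    rw [birkhoffMax_succ, ← max_sub_sub_right, zero_sub, add_sub_cancel_right]
  have hMT : Integrable (fun x ↦ birkhoffMax T φ N (T x)) μ :=
    hT.integrable_comp_of_integrable (hM N)
  rw [htele, integral_sub (hM _) hMT,
    hT.integral_comp_of_aestronglyMeasurable (hM N).aestronglyMeasurable, sub_nonneg]
  exact integral_mono (hM N) (hM _) (birkhoffMax_le_succ N)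

theorem ae_bddAbove_birkhoffSum_of_integral_neg (hT : Ergodic T μ) (hφm : Measurable φ)
    (hφ : Integrable φ μ) (hneg : ∫ x, φ x ∂μ < 0) :
    ∀ᵐ x ∂μ, BddAbove (range fun n ↦ birkhoffSum T φ n x) := by
  set A := {x | BddAbove (range fun n ↦ birkhoffSum T φ n x)}
  have hA : MeasurableSet A :=
    measurableSet_bddAbove_range fun n ↦ measurable_birkhoffSum hT.measurable hφm n
  have hTA : T ⁻¹' A = A := Set.ext bddAbove_range_birkhoffSum_apply_iff
  refine (hT.ae_mem_or_ae_notMem hA hTA).resolve_right fun hAc ↦ hneg.not_ge ?_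
  have hlim : Tendsto (fun N ↦ ∫ x, max (-birkhoffMax T φ N (T x)) (φ x) ∂μ) atTop
      (𝓝 (∫ x, φ x ∂μ)) := by
    refine tendsto_integral_of_dominated_convergence (fun x ↦ |φ x|) (fun N ↦ ?_) hφ.abs
      (fun N ↦ ae_of_all _ fun x ↦
        (Real.norm_eq_abs _).trans_le <| abs_max_neg_le_abs (birkhoffMax_nonneg N (T x))) ?_
    · exact (((measurable_birkhoffMax hT.measurable hφm N).comp hT.measurable).neg.max
        hφm).aestronglyMeasurable
    · filter_upwards [hAc] with x hx
      have hTx : T x ∉ A := by rwa [← Set.mem_preimage, hTA]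
      refine tendsto_const_nhds.congr' ?_
      filter_upwards [(tendsto_birkhoffMax_atTop hTx).eventually_ge_atTop (-φ x)] with N hN
      exact (max_eq_right (by linarith)).symm
  exact ge_of_tendsto' hlim (integral_max_neg_birkhoffMax_comp_nonneg hT.toMeasurePreserving hφ)

end MaximalInequality

section Excess

variable {X : Type*} {T : X → X} {φ : X → ℝ} {c : ℝ}

-- Junk value: the supremum is `0` when the sums are not bounded above.
noncomputable def birkhoffExcess (T : X → X) (φ : X → ℝ) (c : ℝ) (x : X) : ℝ :=
  ⨆ n : ℕ, (birkhoffSum T φ n x - n * c)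

lemma birkhoffExcess_nonneg (x : X) : 0 ≤ birkhoffExcess T φ c x := by
  by_cases h : BddAbove (range fun n : ℕ ↦ birkhoffSum T φ n x - n * c)
  · exact le_ciSup_of_le h 0 (by simp)
  · rw [birkhoffExcess, ciSup_of_not_bddAbove h, Real.sSup_empty]

lemma birkhoffSum_sub_const (n : ℕ) (x : X) :
    birkhoffSum T (fun y ↦ φ y - c) n x = birkhoffSum T φ n x - n * c := by
  simp [birkhoffSum, sum_sub_distrib]

variable [MeasurableSpace X] {μ : Measure X}

lemma measurable_birkhoffExcess (hT : Measurable T) (hφ : Measurable φ) :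
    Measurable (birkhoffExcess T φ c) :=
  Measurable.iSup fun n ↦ (measurable_birkhoffSum hT hφ n).sub_const _

theorem ae_birkhoffSum_sub_le_birkhoffExcess [IsProbabilityMeasure μ] (hT : Ergodic T μ)
    (hφm : Measurable φ) (hφ : Integrable φ μ) (hc : ∫ x, φ x ∂μ < c) :
    ∀ᵐ x ∂μ, ∀ n : ℕ, birkhoffSum T φ n x - n * c ≤ birkhoffExcess T φ c x := by
  have hneg : ∫ x, (φ x - c) ∂μ < 0 := by
    rw [integral_sub hφ (integrable_const c), integral_const, probReal_univ, one_smul]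
    linarith
  filter_upwards [ae_bddAbove_birkhoffSum_of_integral_neg hT (hφm.sub_const c)
    (hφ.sub (integrable_const c)) hneg] with x hx n
  simp only [birkhoffSum_sub_const] at hx
  exact le_ciSup hx n

end Excess

lemma birkhoffSum_comp_iterate_of_leftInverse {X M : Type*} [AddCommMonoid M] {f g : X → X}
    (hgf : LeftInverse g f) (φ : X → M) (n : ℕ) (x : X) :
    birkhoffSum g (φ ∘ g) n (f^[n] x) = birkhoffSum f φ n x := by
  induction n with
  | zero => simp
  | succ n ih =>
    rw [birkhoffSum_succ', iterate_succ_apply', comp_apply, hgf, ih, birkhoffSum_succ, add_comm]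

lemma Ergodic.of_leftInverse {X : Type*} [MeasurableSpace X] {μ : Measure X} {f g : X → X}
    (hf : Ergodic f μ) (hg : MeasurePreserving g μ μ) (hgf : LeftInverse g f) : Ergodic g μ where
  toMeasurePreserving := hg
  aeconst_set s hs hgs := hf.aeconst_set hs <| calc
    f ⁻¹' s = f ⁻¹' (g ⁻¹' s) := by rw [hgs]
    _ = s := by rw [← Set.preimage_comp, hgf.comp_eq_id, Set.preimage_id]

lemma prod_Icc_iterate_eq_exp_birkhoffSum {X : Type*} (g : X → X) {u L : X → ℝ}
    (hL : ∀ x, Real.exp (L x) = u x) (n : ℕ) (x : X) :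
    ∏ j ∈ Icc 1 n, u (g^[j] x) = Real.exp (birkhoffSum g (L ∘ g) n x) := by
  rw [birkhoffSum, Real.exp_sum, range_eq_Ico, ← Finset.Ico_add_one_right_eq_Icc,
    ← prod_Ico_add' _ 0 n 1]
  refine prod_congr rfl fun k _ ↦ ?_
  rw [comp_apply, hL, iterate_succ_apply']

-- Backward sums from `f^[q] x` are forward sums ending at `x` (length `≤ q`), or a forward sum
-- of length `q` followed by a backward sum from `x`.
lemma birkhoffSum_iterate_sub_le {X : Type*} {f g : X → X} (hgf : LeftInverse g f)
    {L : X → ℝ} {χ ε s₁ s₂ s : ℝ} {x : X} (hε : 0 ≤ ε)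
    (h₁ : ∀ n : ℕ, birkhoffSum f L n x - n * (χ + ε / 2) ≤ s₁)
    (h₂ : ∀ n : ℕ, n * (χ - ε / 2) - birkhoffSum f L n x ≤ s₂)
    (h : ∀ n : ℕ, birkhoffSum g (L ∘ g) n x - n * (χ + ε) ≤ s) (hs₂ : 0 ≤ s₂) (hs : 0 ≤ s)
    (q n : ℕ) : birkhoffSum g (L ∘ g) n (f^[q] x) - n * (χ + ε) ≤ q * ε + (s₁ + s₂ + s) := by
  rcases le_total n q with hnq | hqn
  · obtain ⟨m, rfl⟩ := Nat.exists_eq_add_of_le' hnq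
    have hsplit : birkhoffSum g (L ∘ g) n (f^[m + n] x) =
        birkhoffSum f L (m + n) x - birkhoffSum f L m x := by
      rw [add_comm m n, iterate_add_apply, birkhoffSum_comp_iterate_of_leftInverse hgf,
        add_comm n m, birkhoffSum_add]
      ring
    have hq := h₁ (m + n)
    rw [hsplit]
    push_cast at hq ⊢
    linarith [h₂ m, mul_nonneg (Nat.cast_nonneg (α := ℝ) n) hε]
  · obtain ⟨m, rfl⟩ := Nat.exists_eq_add_of_le hqn
    have hsplit : birkhoffSum g (L ∘ g) (q + m) (f^[q] x) =
        birkhoffSum f L q x + birkhoffSum g (L ∘ g) m x := by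
      rw [birkhoffSum_add, (hgf.iterate q) x, birkhoffSum_comp_iterate_of_leftInverse hgf]
    rw [hsplit]
    push_cast
    linarith [h₁ q, h m, mul_nonneg (Nat.cast_nonneg (α := ℝ) q) hε]

theorem stmt_1_general {X : Type*} [MeasurableSpace X]
    (μ : Measure X) [IsProbabilityMeasure μ]
    (f g : X → X) (hg : MeasurePreserving g μ μ)
    (hgf : ∀ x, g (f x) = x)
    (herg : Ergodic f μ)
    (ε : ℝ) (hε : 0 < ε)
    (u : X → ℝ) (hu : Measurable u) (hupos : ∀ x, 0 < u x)
    (hlog : Integrable (fun x => Real.log (u x)) μ)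
    (χ : ℝ) (hχ : χ = ∫ x, Real.log (u x) ∂μ) :
    ∃ V₂ : X → ℝ, Measurable V₂ ∧ (∀ x, 1 ≤ V₂ x) ∧
      -- `V₂` is `ε`-fast:
      (∃ S : X → ℝ, Measurable S ∧ (∀ x, 1 ≤ S x) ∧
        ∀ᵐ x ∂μ, ∀ q : ℕ, 1 ≤ q → V₂ (f^[q] x) ≤ Real.exp (q * ε) * S x) ∧
      ∀ᵐ x ∂μ, ∀ n : ℕ, 1 ≤ n →
        ∏ j ∈ Finset.Icc 1 n, u (g^[j] x) ≤ V₂ x * Real.exp (n * (χ + ε)) := by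
  set L : X → ℝ := fun x ↦ Real.log (u x)
  have hLm : Measurable L := hu.log
  have hχg : ∫ x, (L ∘ g) x ∂μ = χ :=
    hχ ▸ hg.integral_comp_of_aestronglyMeasurable hlog.aestronglyMeasurable
  have hb := ae_birkhoffSum_sub_le_birkhoffExcess (herg.of_leftInverse hg hgf)
    (hLm.comp hg.measurable) (hg.integrable_comp_of_integrable hlog) (c := χ + ε) (by linarith)
  have h₁ := ae_birkhoffSum_sub_le_birkhoffExcess herg hLm hlog (c := χ + ε / 2) (by linarith)
  have h₂ := ae_birkhoffSum_sub_le_birkhoffExcess herg hLm.neg hlog.neg (c := -(χ - ε / 2))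
    (by simp only [Pi.neg_apply, integral_neg, ← hχ]; linarith)
  set V := birkhoffExcess g (L ∘ g) (χ + ε)
  set s₁ := birkhoffExcess f L (χ + ε / 2)
  set s₂ := birkhoffExcess f (-L) (-(χ - ε / 2))
  have hVm : Measurable V := measurable_birkhoffExcess hg.measurable (hLm.comp hg.measurable)
  have hs₁m : Measurable s₁ := measurable_birkhoffExcess herg.measurable hLm
  have hs₂m : Measurable s₂ := measurable_birkhoffExcess herg.measurable hLm.neg
  refine ⟨fun x ↦ Real.exp (V x), hVm.exp, fun x ↦ Real.one_le_exp (birkhoffExcess_nonneg x),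
    ⟨fun x ↦ Real.exp (s₁ x + s₂ x + V x), ((hs₁m.add hs₂m).add hVm).exp, fun x ↦ Real.one_le_exp
      (add_nonneg (add_nonneg (birkhoffExcess_nonneg x) (birkhoffExcess_nonneg x))
        (birkhoffExcess_nonneg x)), ?_⟩, ?_⟩
  · filter_upwards [h₁, h₂, hb] with x hx₁ hx₂ hxb q _
    rw [← Real.exp_add, Real.exp_le_exp]
    refine ciSup_le fun n ↦ birkhoffSum_iterate_sub_le hgf hε.le hx₁ (fun n ↦ ?_) hxb
      (birkhoffExcess_nonneg x) (birkhoffExcess_nonneg x) q n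
    linarith [hx₂ n, birkhoffSum_neg f L n x]
  · filter_upwards [hb] with x hxb n _
    rw [prod_Icc_iterate_eq_exp_birkhoffSum g (fun x ↦ Real.exp_log (hupos x)), ← Real.exp_add,
      Real.exp_le_exp]
    linarith [hxb n]

/-- Along backward orbits, products of an a.e. positive function with integrable
logarithm are controlled by an `ε`-fast function `V₂ ≥ 1`. -/
theorem stmt_1 {X : Type*} [MeasurableSpace X]
    (μ : Measure X) [IsProbabilityMeasure μ]
    (f g : X → X) (hf : MeasurePreserving f μ μ) (hg : MeasurePreserving g μ μ)
    (hfg : ∀ x, f (g x) = x) (hgf : ∀ x, g (f x) = x)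
    (herg : Ergodic f μ)
    (ε : ℝ) (hε : 0 < ε)
    (u : X → ℝ) (hu : Measurable u) (hupos : ∀ x, 0 < u x)
    (hlog : Integrable (fun x => Real.log (u x)) μ)
    (χ : ℝ) (hχ : χ = ∫ x, Real.log (u x) ∂μ) :
    ∃ V₂ : X → ℝ, Measurable V₂ ∧ (∀ x, 1 ≤ V₂ x) ∧
      -- `V₂` is `ε`-fast:
      (∃ S : X → ℝ, Measurable S ∧ (∀ x, 1 ≤ S x) ∧
        ∀ᵐ x ∂μ, ∀ q : ℕ, 1 ≤ q → V₂ (f^[q] x) ≤ Real.exp (q * ε) * S x) ∧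
      ∀ᵐ x ∂μ, ∀ n : ℕ, 1 ≤ n →
        ∏ j ∈ Finset.Icc 1 n, u (g^[j] x) ≤ V₂ x * Real.exp (n * (χ + ε)) :=
  stmt_1_general μ f g hg hgf herg ε hε u hu hupos hlog χ hχ
end

section
/- Let (X̂, f̂, μ̂) be an invertible ergodic measure-preserving system, ε > 0, and u : X̂ → (0,∞) measurable with log u integrable. Then there exists a measurable function V : X̂ → (0,1] that is ε-slow (i.e., there is a measurable S̃ : X̂ → (0,1] with V(f̂^q(x̂)) ≥ e^{-qε} S̃(x̂) for μ̂-a.e. x̂ and all q ≥ 1) such that for μ̂-a.e. x̂ and all n ≥ 0, u(f̂^{-n}(x̂)) ≥ V(x̂) e^{-nε}. -/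
/-!
Let `L_T(x) = inf_n min(1, u(Tⁿx) e^{nε})` (`orbitInf T ε u`). Since `log u` is integrable
and `T` preserves `μ`, `∑ₙ μ{u ∘ Tⁿ < e^{-nε}} ≤ ∑ₙ μ{|log u| > nε} < ∞`, so by Borel–Cantelli
`u(Tⁿx) ≥ e^{-nε}` for all large `n`, and `L_T > 0` a.e. The two-sided infimum
`D = min L_f L_g` loses at most a factor `e^{-ε}` per step of `f`, because `g` undoes `f`;
hence `D(f^q x) ≥ e^{-qε} D(x)`, while `D(x) ≤ L_g(x) ≤ u(gⁿx) e^{nε}`. Redefining `D` as `1`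
on the null set where it vanishes gives `V`, and `S = V` witnesses its slowness.
-/

open MeasureTheory Filter Real
open scoped ENNReal

section OrbitInf

variable {X : Type*}

noncomputable def orbitInf (T : X → X) (ε : ℝ) (u : X → ℝ) (x : X) : ℝ :=
  ⨅ n : ℕ, min 1 (u (T^[n] x) * exp (n * ε))

variable {T : X → X} {ε : ℝ} {u : X → ℝ}

lemma orbitInf_le (hu : ∀ x, 0 ≤ u x) (x : X) (n : ℕ) :
    orbitInf T ε u x ≤ min 1 (u (T^[n] x) * exp (n * ε)) :=
  ciInf_le ⟨0, by
    rintro _ ⟨k, rfl⟩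
    exact le_min zero_le_one (mul_nonneg (hu _) (exp_pos _).le)⟩ n

lemma orbitInf_nonneg (hu : ∀ x, 0 ≤ u x) (x : X) : 0 ≤ orbitInf T ε u x :=
  le_ciInf fun _ => le_min zero_le_one (mul_nonneg (hu _) (exp_pos _).le)

lemma orbitInf_le_one (hu : ∀ x, 0 ≤ u x) (x : X) : orbitInf T ε u x ≤ 1 :=
  (orbitInf_le hu x 0).trans (min_le_left _ _)

lemma orbitInf_mul_exp_neg_le (hu : ∀ x, 0 ≤ u x) (x : X) (n : ℕ) :
    orbitInf T ε u x * exp (-(n * ε)) ≤ u (T^[n] x) := by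
  rw [← le_div_iff₀ (exp_pos _), div_eq_mul_inv, ← exp_neg, neg_neg]
  exact (orbitInf_le hu x n).trans (min_le_right _ _)

lemma measurable_orbitInf [MeasurableSpace X] (hT : Measurable T) (hu : Measurable u) :
    Measurable (orbitInf T ε u) :=
  Measurable.iInf fun n => measurable_const.min ((hu.comp (hT.iterate n)).mul measurable_const)

lemma exp_neg_mul_min_one_le (hε : 0 ≤ ε) (a : ℝ) :
    exp (-ε) * min 1 (a * exp ε) ≤ min 1 a := by
  rw [mul_min_of_nonneg _ _ (exp_pos _).le, mul_one, mul_comm a, ← mul_assoc, ← exp_add,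
    neg_add_cancel, exp_zero, one_mul]
  exact min_le_min_right a (exp_le_one_iff.2 (neg_nonpos.2 hε))

lemma exp_neg_mul_orbitInf_le_orbitInf_apply (hu : ∀ x, 0 ≤ u x) (hε : 0 ≤ ε) (x : X) :
    exp (-ε) * orbitInf T ε u x ≤ orbitInf T ε u (T x) := by
  refine le_ciInf fun n => ?_
  have h := orbitInf_le (T := T) (ε := ε) hu x (n + 1)
  rw [Function.iterate_succ_apply, Nat.cast_succ, add_one_mul, exp_add, ← mul_assoc] at h
  calc exp (-ε) * orbitInf T ε u x
      ≤ exp (-ε) * min 1 (u (T^[n] (T x)) * exp (n * ε) * exp ε) :=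
        mul_le_mul_of_nonneg_left h (exp_pos _).le
    _ ≤ min 1 (u (T^[n] (T x)) * exp (n * ε)) := exp_neg_mul_min_one_le hε _

lemma exp_neg_mul_min_orbitInf_le_orbitInf_apply {f g : X → X} (hgf : Function.LeftInverse g f)
    (hu : ∀ x, 0 ≤ u x) (hε : 0 ≤ ε) (x : X) :
    exp (-ε) * min (orbitInf f ε u x) (orbitInf g ε u x) ≤ orbitInf g ε u (f x) := by
  have hexp : exp (-ε) ≤ 1 := exp_le_one_iff.2 (neg_nonpos.2 hε)
  refine le_ciInf fun n => ?_
  cases n with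
  | zero =>
    calc exp (-ε) * min (orbitInf f ε u x) (orbitInf g ε u x)
        ≤ exp (-ε) * min 1 (u (f x) * exp ε) := by
          have h := orbitInf_le (T := f) (ε := ε) hu x 1
          rw [Function.iterate_one, Nat.cast_one, one_mul] at h
          exact mul_le_mul_of_nonneg_left ((min_le_left _ _).trans h) (exp_pos _).le
      _ ≤ min 1 (u (g^[0] (f x)) * exp ((0 : ℕ) * ε)) := by
          simpa using exp_neg_mul_min_one_le hε (u (f x))
  | succ n =>
    calc exp (-ε) * min (orbitInf f ε u x) (orbitInf g ε u x)
        ≤ orbitInf g ε u x :=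
          (mul_le_of_le_one_left (le_min (orbitInf_nonneg hu x) (orbitInf_nonneg hu x)) hexp).trans
            (min_le_right _ _)
      _ ≤ min 1 (u (g^[n] x) * exp (n * ε)) := orbitInf_le hu x n
      _ ≤ min 1 (u (g^[n + 1] (f x)) * exp ((n + 1 : ℕ) * ε)) := by
          rw [Function.iterate_succ_apply, hgf x]
          gcongr
          · exact hu _
          · exact_mod_cast n.le_succ

lemma pow_mul_le_apply_iterate {f : X → X} {D : X → ℝ} {c : ℝ} (hc : 0 ≤ c)
    (hD : ∀ x, c * D x ≤ D (f x)) (q : ℕ) (x : X) : c ^ q * D x ≤ D (f^[q] x) := by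
  induction q with
  | zero => simp
  | succ q ih =>
    rw [pow_succ', mul_assoc, Function.iterate_succ_apply']
    exact (mul_le_mul_of_nonneg_left ih hc).trans (hD _)

lemma exp_neg_mul_min_orbitInf_le_iterate {f g : X → X} (hgf : Function.LeftInverse g f)
    (hu : ∀ x, 0 ≤ u x) (hε : 0 ≤ ε) (q : ℕ) (x : X) :
    exp (-(q * ε)) * min (orbitInf f ε u x) (orbitInf g ε u x)
      ≤ min (orbitInf f ε u (f^[q] x)) (orbitInf g ε u (f^[q] x)) := by
  rw [← mul_neg, exp_nat_mul]
  refine pow_mul_le_apply_iterate (D := fun y => min (orbitInf f ε u y) (orbitInf g ε u y))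
    (exp_pos _).le (fun y => le_min ?_ ?_) q x
  · exact (mul_le_mul_of_nonneg_left (min_le_left _ _) (exp_pos _).le).trans
      (exp_neg_mul_orbitInf_le_orbitInf_apply hu hε y)
  · exact exp_neg_mul_min_orbitInf_le_orbitInf_apply hgf hu hε y

end OrbitInf

lemma iInf_pos_of_eventually_le {a : ℕ → ℝ} {c : ℝ} (hpos : ∀ n, 0 < a n) (hc : 0 < c)
    (hev : ∀ᶠ n in atTop, c ≤ a n) : 0 < ⨅ n, a n := by
  obtain ⟨N, hN⟩ := eventually_atTop.1 hev
  obtain ⟨m, -, hm⟩ := (Finset.range (N + 1)).exists_min_image a ⟨0, by simp⟩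
  refine (lt_min hc (hpos m)).trans_le (le_ciInf fun n => ?_)
  rcases le_or_gt N n with hn | hn
  · exact (min_le_left _ _).trans (hN n hn)
  · exact (min_le_right _ _).trans (hm n (Finset.mem_range.2 (by omega)))

section MeasurePreserving

variable {X : Type*} [MeasurableSpace X] {μ : Measure X} [IsProbabilityMeasure μ]
  {T : X → X} {ε : ℝ} {u : X → ℝ}

lemma ae_eventually_exp_neg_mul_le (hT : MeasurePreserving T μ μ) (hε : 0 < ε)
    (hu : Measurable u) (hupos : ∀ x, 0 < u x) (hlog : Integrable (fun x => log (u x)) μ) :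
    ∀ᵐ x ∂μ, ∀ᶠ n : ℕ in atTop, exp (-(n * ε)) ≤ u (T^[n] x) := by
  have hsub : ∀ n : ℕ,
      {y | u y < exp (-(n * ε))} ⊆ {y | |log (u y)| / ε ∈ Set.Ioi (n : ℝ)} := by
    intro n y hy
    have hlt : log (u y) < -(n * ε) := by simpa using log_lt_log (hupos y) hy
    rw [Set.mem_ofPred_eq, Set.mem_Ioi, lt_div_iff₀ hε]
    linarith [neg_le_abs (log (u y))]
  have hsum : ∑' n : ℕ, μ (T^[n] ⁻¹' {y | u y < exp (-(n * ε))}) ≠ ∞ := by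
    refine ne_top_of_le_ne_top (@ProbabilityTheory.tsum_prob_mem_Ioi_lt_top X ⟨μ⟩ _ _
      (hlog.abs.div_const ε) fun y => div_nonneg (abs_nonneg _) hε.le).ne
      (ENNReal.tsum_le_tsum fun n => ?_)
    rw [(hT.iterate n).measure_preimage (measurableSet_lt hu measurable_const).nullMeasurableSet]
    exact measure_mono (hsub n)
  filter_upwards [ae_eventually_notMem hsum] with x hx
  exact hx.mono fun n hn => not_lt.1 hn

lemma ae_orbitInf_pos (hT : MeasurePreserving T μ μ) (hε : 0 < ε)
    (hu : Measurable u) (hupos : ∀ x, 0 < u x) (hlog : Integrable (fun x => log (u x)) μ) :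
    ∀ᵐ x ∂μ, 0 < orbitInf T ε u x := by
  filter_upwards [ae_eventually_exp_neg_mul_le hT hε hu hupos hlog] with x hx
  refine iInf_pos_of_eventually_le (fun n => lt_min one_pos (mul_pos (hupos _) (exp_pos _))) one_pos ?_
  refine hx.mono fun n hn => le_min le_rfl ?_
  rwa [← div_le_iff₀ (exp_pos _), one_div, ← exp_neg]

end MeasurePreserving

lemma exists_measurable_pos_of_le_one {X : Type*} [MeasurableSpace X] {D : X → ℝ}
    (hD : Measurable D) (hD1 : ∀ x, D x ≤ 1) :
    ∃ V : X → ℝ, Measurable V ∧ (∀ x, 0 < V x ∧ V x ≤ 1) ∧ (∀ x, D x ≤ V x) ∧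
      ∀ x, 0 < D x → V x = D x := by
  classical
  refine ⟨fun x => if 0 < D x then D x else 1,
    hD.ite (measurableSet_lt measurable_const hD) measurable_const,
    fun x => ?_, fun x => ?_, fun x hx => if_pos hx⟩ <;> dsimp only <;> split_ifs with hx
  exacts [⟨hx, hD1 x⟩, ⟨one_pos, le_rfl⟩, le_rfl, hD1 x]

theorem stmt_2_general {X : Type*} [MeasurableSpace X]
    (μ : Measure X) [IsProbabilityMeasure μ]
    (f g : X → X) (hf : MeasurePreserving f μ μ) (hg : MeasurePreserving g μ μ)
    (hgf : ∀ x, g (f x) = x)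
    (ε : ℝ) (hε : 0 < ε)
    (u : X → ℝ) (hu : Measurable u) (hupos : ∀ x, 0 < u x)
    (hlog : Integrable (fun x => Real.log (u x)) μ) :
    ∃ V : X → ℝ, Measurable V ∧ (∀ x, 0 < V x ∧ V x ≤ 1) ∧
      -- `V` is `ε`-slow:
      (∃ S : X → ℝ, Measurable S ∧ (∀ x, 0 < S x ∧ S x ≤ 1) ∧
        ∀ᵐ x ∂μ, ∀ q : ℕ, 1 ≤ q → Real.exp (-(q * ε)) * S x ≤ V (f^[q] x)) ∧
      ∀ᵐ x ∂μ, ∀ n : ℕ, V x * Real.exp (-(n * ε)) ≤ u (g^[n] x) := by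
  have hu0 : ∀ x, 0 ≤ u x := fun x => (hupos x).le
  set D : X → ℝ := fun x => min (orbitInf f ε u x) (orbitInf g ε u x)
  obtain ⟨V, hVm, hV01, hDV, hVD⟩ := exists_measurable_pos_of_le_one
    ((measurable_orbitInf hf.measurable hu).min (measurable_orbitInf hg.measurable hu))
    fun x => (min_le_left _ _).trans (orbitInf_le_one hu0 x)
  have hDpos : ∀ᵐ x ∂μ, 0 < D x := by
    filter_upwards [ae_orbitInf_pos hf hε hu hupos hlog, ae_orbitInf_pos hg hε hu hupos hlog]
      with x hfx hgx using lt_min hfx hgx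
  refine ⟨V, hVm, hV01, ⟨V, hVm, hV01, ?_⟩, ?_⟩
  · filter_upwards [hDpos] with x hx q _
    rw [hVD x hx]
    exact (exp_neg_mul_min_orbitInf_le_iterate hgf hu0 hε.le q x).trans (hDV _)
  · filter_upwards [hDpos] with x hx n
    rw [hVD x hx]
    exact (mul_le_mul_of_nonneg_right (min_le_right _ _) (exp_pos _).le).trans
      (orbitInf_mul_exp_neg_le hu0 x n)

/-- Along backward orbits, an a.e. positive function with integrable logarithm
is bounded below by `V(x) e^{-nε}` for an `ε`-slow function `V : X̂ → (0,1]`. -/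
theorem stmt_2 {X : Type*} [MeasurableSpace X]
    (μ : Measure X) [IsProbabilityMeasure μ]
    (f g : X → X) (hf : MeasurePreserving f μ μ) (hg : MeasurePreserving g μ μ)
    (hfg : ∀ x, f (g x) = x) (hgf : ∀ x, g (f x) = x)
    (herg : Ergodic f μ)
    (ε : ℝ) (hε : 0 < ε)
    (u : X → ℝ) (hu : Measurable u) (hupos : ∀ x, 0 < u x)
    (hlog : Integrable (fun x => Real.log (u x)) μ) :
    ∃ V : X → ℝ, Measurable V ∧ (∀ x, 0 < V x ∧ V x ≤ 1) ∧
      -- `V` is `ε`-slow: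
      (∃ S : X → ℝ, Measurable S ∧ (∀ x, 0 < S x ∧ S x ≤ 1) ∧
        ∀ᵐ x ∂μ, ∀ q : ℕ, 1 ≤ q → Real.exp (-(q * ε)) * S x ≤ V (f^[q] x)) ∧
      ∀ᵐ x ∂μ, ∀ n : ℕ, V x * Real.exp (-(n * ε)) ≤ u (g^[n] x) :=
  stmt_2_general μ f g hf hg hgf ε hε u hu hupos hlog
end

section
/- Let μ be a Borel probability measure on a compact metric space X, and let Λ be a Borel set with μ(Λ) > 0. Suppose that for every x ∈ Λ there is a decreasing sequence of positive reals (ρ_n(x))_{n≥0} with ρ_n(x) → 0, log ρ_{n+1}(x)/log ρ_n(x) → 1, and a ≤ liminf_n [log μ(B(x, ρ_n(x))) / log ρ_n(x)]. Then the Hausdorff dimension of Λ is at least a. -/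
/-!
Fix `0 < b < q < a`. At `x ∈ Λ` the liminf hypothesis gives `μ(B(x, ρₙ)) ≤ ρₙ^q` for large `n`,
and `log ρₙ₊₁ / log ρₙ → 1` gives `ρₙ₊₁ ≥ ρₙ^(q/b)`; hence for `ρₙ₊₁ < r ≤ ρₙ`,
`μ(B(x, r)) ≤ ρₙ^q ≤ ρₙ₊₁^b ≤ r^b`. So `Λ` is covered by countably many closed sets on which
`μ(B(x, r)) ≤ r^b` for all `r < 1/(n+1)`; one of them meets `Λ` in positive measure, and the mass
distribution principle bounds the dimension of that piece below by `b`.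
-/

open MeasureTheory Filter Metric Set
open scoped ENNReal Topology

theorem eventually_lt_of_lt_liminf_of_nonneg {α : Type*} {f : Filter α} {u : α → ℝ} {b : ℝ}
    (hb : 0 ≤ b) (h : b < liminf u f) : ∀ᶠ n in f, b < u n := by
  rw [liminf_eq] at h
  -- without boundedness `liminf` may be the junk value `sSup ∅ = 0`, which `0 ≤ b` rules out
  have hne : {c | ∀ᶠ n in f, c ≤ u n}.Nonempty := by
    by_contra hempty
    rw [not_nonempty_iff_eq_empty.mp hempty, Real.sSup_empty] at h
    linarith
  obtain ⟨c, hc, hbc⟩ := exists_lt_of_lt_csSup hne h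
  exact hc.mono fun n hn => hbc.trans_le hn

theorem ENNReal.ofReal_le_of_forall_pos_lt {a : ℝ} {D : ℝ≥0∞}
    (h : ∀ b : ℝ, 0 < b → b < a → ENNReal.ofReal b ≤ D) : ENNReal.ofReal a ≤ D := by
  refine ENNReal.le_of_forall_nnreal_lt fun r hr => ?_
  rcases eq_or_ne r 0 with rfl | hr0
  · exact zero_le
  · rw [← ENNReal.ofReal_coe_nnreal] at hr ⊢
    exact h r (by positivity) ((ENNReal.ofReal_lt_ofReal_iff_of_nonneg r.2).mp hr)

theorem le_ofReal_rpow_of_forall_mem_Ioo {b d e : ℝ} (hb : 0 ≤ b) (hde : d < e) {c : ℝ≥0∞}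
    (h : ∀ r ∈ Ioo d e, c ≤ ENNReal.ofReal (r ^ b)) : c ≤ ENNReal.ofReal (d ^ b) := by
  have hcont : ContinuousAt (fun r : ℝ => ENNReal.ofReal (r ^ b)) d :=
    ENNReal.continuous_ofReal.continuousAt.comp (Real.continuousAt_rpow_const d b (Or.inr hb))
  refine ge_of_tendsto (hcont.tendsto.mono_left (nhdsWithin_le_nhds (s := Ioi d))) ?_
  filter_upwards [Ioo_mem_nhdsGT hde] using h

theorem rpow_lt_of_log_div_log_lt {s t θ : ℝ} (hs0 : 0 < s) (hs1 : s < 1) (ht : 0 < t)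
    (h : Real.log t / Real.log s < θ) : s ^ θ < t := by
  have hlog : Real.log s < 0 := Real.log_neg hs0 hs1
  rw [← Real.log_lt_log_iff (by positivity) ht, Real.log_rpow hs0]
  rwa [div_lt_iff_of_neg hlog] at h

theorem le_ofReal_rpow_of_le_log_div_log {t : ℝ≥0∞} {s q : ℝ} (hs0 : 0 < s) (hs1 : s < 1)
    (hq : 0 < q) (h : q ≤ Real.log t.toReal / Real.log s) : t ≤ ENNReal.ofReal (s ^ q) := by
  have hlog : Real.log s < 0 := Real.log_neg hs0 hs1
  rw [le_div_iff_of_neg hlog, ← Real.log_rpow hs0] at h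
  -- both junk cases `t = 0` and `t = ∞` give `log t.toReal = 0`, which `h` excludes
  have ht : 0 < t.toReal := by
    by_contra! ht
    rw [le_antisymm ht ENNReal.toReal_nonneg, Real.log_zero] at h
    exact h.not_gt (Real.log_neg (by positivity) (Real.rpow_lt_one hs0.le hs1 hq))
  rw [← ENNReal.ofReal_toReal (ENNReal.toReal_pos_iff.mp ht).2.ne]
  exact ENNReal.ofReal_le_ofReal ((Real.log_le_log_iff ht (by positivity)).mp h)

theorem exists_lt_le_of_tendsto_zero {ρ : ℕ → ℝ} (hρ : Tendsto ρ atTop (𝓝 0)) {r : ℝ}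
    (hr : 0 < r) (N : ℕ) (hrN : r ≤ ρ N) : ∃ n ≥ N, ρ (n + 1) < r ∧ r ≤ ρ n := by
  obtain ⟨k, hk⟩ := ((hρ.comp (tendsto_add_atTop_nat N)).eventually_lt_const hr).exists
  obtain ⟨n, hn, hn1⟩ := Nat.exists_not_and_succ_of_not_zero_of_exists
    (p := fun m => ρ (m + N) < r) (by simpa using hrN) ⟨k, hk⟩
  exact ⟨n + N, by omega, by rwa [add_right_comm], not_lt.mp hn⟩

theorem Monotone.exists_pos_forall_le_ofReal_rpow {F : ℝ → ℝ≥0∞} (hF : Monotone F) {ρ : ℕ → ℝ}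
    (hρ0 : ∀ n, 0 < ρ n) (hρ : Tendsto ρ atTop (𝓝 0)) {b q : ℝ} (hb : 0 < b)
    (hFρ : ∀ᶠ n in atTop, F (ρ n) ≤ ENNReal.ofReal (ρ n ^ q))
    (hgap : ∀ᶠ n in atTop, ρ n ^ (q / b) ≤ ρ (n + 1)) :
    ∃ δ > 0, ∀ r ∈ Ioo 0 δ, F r ≤ ENNReal.ofReal (r ^ b) := by
  obtain ⟨N, hN⟩ := (hFρ.and hgap).exists_forall_of_atTop
  refine ⟨ρ N, hρ0 N, fun r ⟨hr0, hrN⟩ => ?_⟩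
  obtain ⟨n, hnN, hn1, hn⟩ := exists_lt_le_of_tendsto_zero hρ hr0 N hrN.le
  obtain ⟨hFn, hgapn⟩ := hN n hnN
  calc F r ≤ F (ρ n) := hF hn
    _ ≤ ENNReal.ofReal (ρ n ^ q) := hFn
    _ = ENNReal.ofReal ((ρ n ^ (q / b)) ^ b) := by
      rw [← Real.rpow_mul (hρ0 n).le, div_mul_cancel₀ q hb.ne']
    _ ≤ ENNReal.ofReal (r ^ b) := by
      gcongr
      exacts [(Real.rpow_pos_of_pos (hρ0 n) _).le, hgapn.trans hn1.le]

section Frostman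

variable {X : Type*} [MetricSpace X] [MeasurableSpace X] (μ : Measure X)

def frostmanSet (b δ : ℝ) : Set X :=
  {x | ∀ r ∈ Ioo 0 δ, μ (ball x r) ≤ ENNReal.ofReal (r ^ b)}

variable {μ} {b : ℝ}

theorem frostmanSet_anti : Antitone (frostmanSet μ b) :=
  fun _ _ hδ _ hx r hr => hx r ⟨hr.1, hr.2.trans_le hδ⟩

theorem isClosed_frostmanSet (hb : 0 ≤ b) (δ : ℝ) : IsClosed (frostmanSet μ b δ) := by
  refine isClosed_of_closure_subset fun x hx r ⟨hr0, hrδ⟩ => ?_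
  refine le_ofReal_rpow_of_forall_mem_Ioo hb hrδ fun r' ⟨hrr', hr'δ⟩ => ?_
  obtain ⟨y, hy, hxy⟩ := Metric.mem_closure_iff.mp hx (r' - r) (by linarith)
  have hball : ball x r ⊆ ball y r' := ball_subset_ball' (by linarith)
  exact (measure_mono hball).trans (hy r' ⟨hr0.trans hrr', hr'δ⟩)

theorem measure_le_ediam_rpow_of_mem_frostmanSet (hb : 0 ≤ b) {δ : ℝ} {x : X}
    (hx : x ∈ frostmanSet μ b δ) {s : Set X} (hxs : x ∈ s) (hs : ediam s < ENNReal.ofReal δ) :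
    μ s ≤ ediam s ^ b := by
  have hfin : ediam s ≠ ∞ := (hs.trans ENNReal.ofReal_lt_top).ne
  set d := (ediam s).toReal
  have hdδ : d < δ := ENNReal.toReal_lt_of_lt_ofReal hs
  rw [← ENNReal.ofReal_toReal hfin, ENNReal.ofReal_rpow_of_nonneg ENNReal.toReal_nonneg hb]
  refine le_ofReal_rpow_of_forall_mem_Ioo hb hdδ fun r ⟨hdr, hrδ⟩ => ?_
  have hs_ball : s ⊆ ball x r := fun y hy =>
    (dist_le_diam_of_mem' hfin hy hxs).trans_lt hdr
  exact (measure_mono hs_ball).trans (hx r ⟨ENNReal.toReal_nonneg.trans_lt hdr, hrδ⟩)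

theorem ofReal_le_dimH_of_subset_frostmanSet [BorelSpace X] (hb : 0 ≤ b) {δ : ℝ} (hδ : 0 < δ)
    {A : Set X} (hAm : MeasurableSet A) (hA : A ⊆ frostmanSet μ b δ) (hμA : μ A ≠ 0) :
    ENNReal.ofReal b ≤ dimH A := by
  have hrestrict : μ.restrict A ≤ μH[b] := by
    refine Measure.le_hausdorffMeasure b _ _ (ENNReal.ofReal_pos.mpr (half_pos hδ)) fun s hs => ?_
    rw [Measure.restrict_apply' hAm]
    rcases (s ∩ A).eq_empty_or_nonempty with hempty | ⟨x, hxs, hxA⟩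
    · simp [hempty]
    refine (measure_mono inter_subset_left).trans
      (measure_le_ediam_rpow_of_mem_frostmanSet hb (hA hxA) hxs (hs.trans_lt ?_))
    exact ENNReal.ofReal_lt_ofReal_iff'.mpr ⟨half_lt_self hδ, hδ⟩
  have hμH : μH[b] A ≠ 0 := fun h0 =>
    hμA (le_antisymm ((Measure.restrict_apply_self μ A).symm.trans_le
      ((hrestrict A).trans h0.le)) zero_le)
  simpa [ENNReal.ofReal, Real.coe_toNNReal b hb] using
    le_dimH_of_hausdorffMeasure_ne_zero (d := b.toNNReal) (by rwa [Real.coe_toNNReal b hb])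

theorem exists_pos_mem_frostmanSet {x : X} {ρ : ℕ → ℝ}
    (hρ0 : ∀ n, 0 < ρ n) (hρ : Tendsto ρ atTop (𝓝 0))
    (hratio : Tendsto (fun n => Real.log (ρ (n + 1)) / Real.log (ρ n)) atTop (𝓝 1))
    {a b : ℝ} (hb : 0 < b) (hba : b < a)
    (hlim : a ≤ atTop.liminf (fun n => Real.log (μ (ball x (ρ n))).toReal / Real.log (ρ n))) :
    ∃ δ > 0, x ∈ frostmanSet μ b δ := by
  obtain ⟨q, hbq, hqa⟩ := exists_between hba
  have hq : 0 < q := hb.trans hbq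
  have hsmall : ∀ᶠ n in atTop, ρ n < 1 := hρ.eventually_lt_const one_pos
  have hmass : ∀ᶠ n in atTop, μ (ball x (ρ n)) ≤ ENNReal.ofReal (ρ n ^ q) := by
    filter_upwards [eventually_lt_of_lt_liminf_of_nonneg hq.le (hqa.trans_le hlim), hsmall]
      with n hn hn1
    exact le_ofReal_rpow_of_le_log_div_log (hρ0 n) hn1 hq hn.le
  have hgap : ∀ᶠ n in atTop, ρ n ^ (q / b) ≤ ρ (n + 1) := by
    filter_upwards [hratio.eventually_lt_const ((one_lt_div hb).mpr hbq), hsmall] with n hn hn1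
    exact (rpow_lt_of_log_div_log_lt (hρ0 n) hn1 (hρ0 _) hn).le
  have hmono : Monotone fun r => μ (ball x r) := fun _ _ h => measure_mono (ball_subset_ball h)
  exact hmono.exists_pos_forall_le_ofReal_rpow hρ0 hρ hb hmass hgap

end Frostman

theorem stmt_6_general {X : Type*} [MetricSpace X] [MeasurableSpace X]
    [BorelSpace X] (μ : Measure X)
    (Λ : Set X) (hΛ : MeasurableSet Λ) (hΛpos : 0 < μ Λ) (a : ℝ)
    (H : ∀ x ∈ Λ, ∃ ρ : ℕ → ℝ,
      (∀ n, 0 < ρ n) ∧ Antitone ρ ∧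
      Tendsto ρ atTop (nhds 0) ∧
      Tendsto (fun n => Real.log (ρ (n + 1)) / Real.log (ρ n)) atTop (nhds 1) ∧
      a ≤ atTop.liminf
        (fun n => Real.log (μ (ball x (ρ n))).toReal / Real.log (ρ n))) :
    ENNReal.ofReal a ≤ dimH Λ := by
  refine ENNReal.ofReal_le_of_forall_pos_lt fun b hb hba => ?_
  have hcover : Λ ⊆ ⋃ n : ℕ, Λ ∩ frostmanSet μ b (1 / (n + 1)) := by
    intro x hx
    obtain ⟨ρ, hρ0, -, hρ, hratio, hlim⟩ := H x hx
    obtain ⟨δ, hδ, hxδ⟩ := exists_pos_mem_frostmanSet hρ0 hρ hratio hb hba hlim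
    obtain ⟨n, hn⟩ := exists_nat_one_div_lt hδ
    exact mem_iUnion.mpr ⟨n, hx, frostmanSet_anti hn.le hxδ⟩
  obtain ⟨n, hn⟩ := exists_measure_pos_of_not_measure_iUnion_null
    fun h => hΛpos.ne' (measure_mono_null hcover h)
  have hmeas : MeasurableSet (Λ ∩ frostmanSet μ b (1 / (n + 1))) :=
    hΛ.inter (isClosed_frostmanSet hb.le _).measurableSet
  calc ENNReal.ofReal b ≤ dimH (Λ ∩ frostmanSet μ b (1 / (n + 1))) :=
        ofReal_le_dimH_of_subset_frostmanSet hb.le (by positivity) hmeas inter_subset_right hn.ne'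
    _ ≤ dimH Λ := dimH_mono inter_subset_left

/-- Lower-bound half of Young's criterion: pointwise lower estimates of local
measure exponents along a slowly varying sequence of radii bound the Hausdorff
dimension of `Λ` from below. -/
theorem stmt_6 {X : Type*} [MetricSpace X] [CompactSpace X] [MeasurableSpace X]
    [BorelSpace X] (μ : Measure X) [IsProbabilityMeasure μ]
    (Λ : Set X) (hΛ : MeasurableSet Λ) (hΛpos : 0 < μ Λ) (a : ℝ)
    (H : ∀ x ∈ Λ, ∃ ρ : ℕ → ℝ,
      (∀ n, 0 < ρ n) ∧ Antitone ρ ∧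
      Tendsto ρ atTop (nhds 0) ∧
      Tendsto (fun n => Real.log (ρ (n + 1)) / Real.log (ρ n)) atTop (nhds 1) ∧
      a ≤ atTop.liminf
        (fun n => Real.log (μ (ball x (ρ n))).toReal / Real.log (ρ n))) :
    ENNReal.ofReal a ≤ dimH Λ :=
  stmt_6_general μ Λ hΛ hΛpos a H
end

section
/- Let μ be a Borel probability measure on a compact metric space X. If there exists a Borel set Λ with μ(Λ) > 0 such that for every x ∈ Λ there is a decreasing sequence ρ_n(x) → 0 with log ρ_{n+1}(x)/log ρ_n(x) → 1 and a ≤ liminf_n [log μ(B(x, ρ_n(x))) / log ρ_n(x)] for all x ∈ Λ, then dim_H(μ) ≥ a, where dim_H(μ) := inf{ dim_H(Z) : Z Borel, μ(Z) = 1 }. -/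
open MeasureTheory Filter Metric Set Topology Real
open scoped ENNReal NNReal

/-!
Fix `s < a`. Along the radii `ρ n`, the liminf hypothesis gives `μ (B(x, ρ n)) ≤ ρ n ^ t` for some
`t ∈ (s, a)` and all large `n`; since `log ρ (n+1) / log ρ n → 1`, consecutive radii are close
enough on a logarithmic scale that `ρ n ^ t ≤ ρ (n+1) ^ s`, so `μ (B(x, r)) ≤ r ^ s` for every
small `r`, not only along the sequence. On a piece of `Λ ∩ Z` of positive measure where this holds
uniformly, the mass distribution principle gives `μ ≤ μH[s]`, hence `s ≤ dimH (Λ ∩ Z) ≤ dimH Z`.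
-/

lemma lt_rpow_of_lt_log_div_log {u v t : ℝ} (hu0 : 0 < u) (hu1 : u < 1) (hv : 0 ≤ v)
    (h : t < log v / log u) : v < u ^ t := by
  rcases hv.eq_or_lt with rfl | hv
  · exact rpow_pos_of_pos hu0 t
  rw [lt_rpow_iff_log_lt hv hu0]
  exact (lt_div_iff_of_neg (log_neg hu0 hu1)).1 h

lemma rpow_lt_rpow_of_log_div_log_lt {u w s t : ℝ} (hu0 : 0 < u) (hu1 : u < 1) (hw : 0 < w)
    (hs : 0 < s) (h : log w / log u < t / s) : u ^ t < w ^ s := by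
  rw [lt_rpow_iff_log_lt (rpow_pos_of_pos hu0 t) hw, log_rpow hu0]
  calc t * log u = s * (t / s * log u) := by field_simp
    _ < s * log w := mul_lt_mul_of_pos_left ((div_lt_iff_of_neg (log_neg hu0 hu1)).1 h) hs

lemma exists_ge_lt_le_of_tendsto_zero {ρ : ℕ → ℝ} (hρ : Tendsto ρ atTop (𝓝 0)) {N : ℕ} {r : ℝ}
    (hr : 0 < r) (hrN : r ≤ ρ N) : ∃ n ≥ N, ρ (n + 1) < r ∧ r ≤ ρ n := by
  by_contra! h
  have hge : ∀ n ≥ N, r ≤ ρ n := fun n hn =>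
    Nat.le_induction hrN (fun k hk ihk => le_of_not_gt fun hlt => (h k hk hlt).not_ge ihk) n hn
  obtain ⟨n, hnr, hnN⟩ := ((hρ.eventually_lt_const hr).and (eventually_ge_atTop N)).exists
  exact (hge n hnN).not_gt hnr

lemma eventually_le_rpow_of_eventually_le_rpow_seq {f : ℝ → ℝ≥0∞} (hf : Monotone f)
    {ρ : ℕ → ℝ} (hρpos : ∀ n, 0 < ρ n) (hρ0 : Tendsto ρ atTop (𝓝 0))
    (hratio : Tendsto (fun n => log (ρ (n + 1)) / log (ρ n)) atTop (𝓝 1))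
    {s t : ℝ} (hs : 0 < s) (hst : s < t)
    (hft : ∀ᶠ n in atTop, f (ρ n) ≤ ENNReal.ofReal (ρ n ^ t)) :
    ∀ᶠ r in 𝓝[>] 0, f r ≤ ENNReal.ofReal (r ^ s) := by
  obtain ⟨N, hN⟩ := ((hρ0.eventually_lt_const one_pos).and
    (hft.and (hratio.eventually_lt_const ((one_lt_div hs).2 hst)))).exists_forall_of_atTop
  filter_upwards [Ioo_mem_nhdsGT (hρpos N)] with r hr
  obtain ⟨n, hnN, hρr, hrρ⟩ := exists_ge_lt_le_of_tendsto_zero hρ0 hr.1 hr.2.le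
  obtain ⟨hρn1, hfn, hratn⟩ := hN n hnN
  calc f r ≤ f (ρ n) := hf hrρ
    _ ≤ ENNReal.ofReal (ρ n ^ t) := hfn
    _ ≤ ENNReal.ofReal (r ^ s) := ENNReal.ofReal_le_ofReal <|
        (rpow_lt_rpow_of_log_div_log_lt (hρpos n) hρn1 (hρpos _) hs hratn).le.trans
          (rpow_le_rpow (hρpos _).le hρr.le hs.le)

section MassDistribution

variable {X : Type*} [MetricSpace X] [MeasurableSpace X] {μ : Measure X}

lemma eventually_measure_ball_le_rpow_of_lt_liminf [IsProbabilityMeasure μ] {x : X}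
    {ρ : ℕ → ℝ} (hρpos : ∀ n, 0 < ρ n) (hρ0 : Tendsto ρ atTop (𝓝 0)) {t : ℝ}
    (ht : t < atTop.liminf fun n => log (μ (ball x (ρ n))).toReal / log (ρ n)) :
    ∀ᶠ n in atTop, μ (ball x (ρ n)) ≤ ENNReal.ofReal (ρ n ^ t) := by
  have hρ1 : ∀ᶠ n in atTop, ρ n < 1 := hρ0.eventually_lt_const one_pos
  have hnonneg : ∀ᶠ n in atTop, 0 ≤ log (μ (ball x (ρ n))).toReal / log (ρ n) := by
    filter_upwards [hρ1] with n hn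
    exact div_nonneg_of_nonpos (log_nonpos ENNReal.toReal_nonneg measureReal_le_one)
      (log_neg (hρpos n) hn).le
  filter_upwards [hρ1, eventually_lt_of_lt_liminf ht (isBoundedUnder_of_eventually_ge hnonneg)]
    with n hn hlt
  rw [← ENNReal.ofReal_toReal (measure_ne_top μ _)]
  exact ENNReal.ofReal_le_ofReal (lt_rpow_of_lt_log_div_log (hρpos n) hn ENNReal.toReal_nonneg hlt).le

lemma measure_closedBall_le_of_forall_measure_ball_le {x : X} {s c r : ℝ} (hs : 0 ≤ s)
    (hr : 0 ≤ r) (hrc : r < c)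
    (h : ∀ r', 0 < r' → r' < c → μ (ball x r') ≤ ENNReal.ofReal (r' ^ s)) :
    μ (closedBall x r) ≤ ENNReal.ofReal (r ^ s) := by
  have hlim : Tendsto (fun r' : ℝ => ENNReal.ofReal (r' ^ s)) (𝓝[>] r)
      (𝓝 (ENNReal.ofReal (r ^ s))) :=
    ((ENNReal.continuous_ofReal.continuousAt.comp
      (continuousAt_rpow_const r s (Or.inr hs))).tendsto).mono_left nhdsWithin_le_nhds
  refine ge_of_tendsto hlim ?_
  filter_upwards [Ioo_mem_nhdsGT hrc] with r' hr'
  exact (measure_mono (closedBall_subset_ball hr'.1)).trans (h r' (hr.trans_lt hr'.1) hr'.2)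

variable [BorelSpace X]

/-- The mass distribution principle. -/
theorem restrict_le_hausdorffMeasure_of_forall_measure_ball_le {E : Set X} {s c : ℝ}
    (hs : 0 ≤ s) (hc : 0 < c)
    (hE : ∀ x ∈ E, ∀ r, 0 < r → r < c → μ (ball x r) ≤ ENNReal.ofReal (r ^ s)) :
    μ.restrict E ≤ μH[s] := by
  refine Measure.le_hausdorffMeasure s _ (ENNReal.ofReal (c / 2)) (by simpa using half_pos hc)
    fun t ht => ?_
  have hclosure : μ.restrict E t ≤ μ (closure t ∩ E) := by
    rw [← Measure.restrict_apply isClosed_closure.measurableSet]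
    exact measure_mono subset_closure
  rcases (closure t ∩ E).eq_empty_or_nonempty with h | ⟨x, hxt, hxE⟩
  · rw [h, measure_empty] at hclosure
    exact hclosure.trans zero_le
  have htop : ediam t ≠ ∞ := ne_top_of_le_ne_top ENNReal.ofReal_ne_top ht
  set d := (ediam t).toReal
  have hsub : closure t ⊆ closedBall x d := fun y hy => by
    rw [mem_closedBall, dist_edist]
    exact ENNReal.toReal_mono htop (ediam_closure t ▸ edist_le_ediam_of_mem hy hxt)
  have hdc : d < c := by
    have := ENNReal.toReal_mono ENNReal.ofReal_ne_top ht
    rw [ENNReal.toReal_ofReal (half_pos hc).le] at this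
    linarith
  calc μ.restrict E t ≤ μ (closure t ∩ E) := hclosure
    _ ≤ μ (closedBall x d) := measure_mono (inter_subset_left.trans hsub)
    _ ≤ ENNReal.ofReal (d ^ s) :=
        measure_closedBall_le_of_forall_measure_ball_le hs ENNReal.toReal_nonneg hdc (hE x hxE)
    _ = ediam t ^ s := by
        rw [← ENNReal.ofReal_rpow_of_nonneg ENNReal.toReal_nonneg hs, ENNReal.ofReal_toReal htop]

theorem hausdorffMeasure_ne_zero_of_eventually_measure_ball_le {E : Set X} {s : ℝ} (hs : 0 ≤ s)
    (hE : ∀ x ∈ E, ∀ᶠ r in 𝓝[>] 0, μ (ball x r) ≤ ENNReal.ofReal (r ^ s)) (hμE : μ E ≠ 0) :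
    μH[s] E ≠ 0 := by
  set F : ℕ → Set X := fun m =>
    {x ∈ E | ∀ r : ℝ, 0 < r → r < 1 / (m + 1) → μ (ball x r) ≤ ENNReal.ofReal (r ^ s)}
  have hcover : E ⊆ ⋃ m, F m := fun x hx => by
    obtain ⟨ε, hε, hεsub⟩ := mem_nhdsGT_iff_exists_Ioo_subset.1 (hE x hx)
    obtain ⟨m, hm⟩ := exists_nat_one_div_lt (mem_Ioi.1 hε)
    exact mem_iUnion.2 ⟨m, hx, fun r hr hrm => hεsub ⟨hr, hrm.trans hm⟩⟩
  obtain ⟨m, hm⟩ : ∃ m, μ (F m) ≠ 0 := by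
    by_contra! h
    exact hμE (measure_mono_null hcover (measure_iUnion_null_iff.2 h))
  have hFm : μ (F m) ≤ μH[s] (F m) := by
    have := restrict_le_hausdorffMeasure_of_forall_measure_ball_le (E := F m)
      (c := 1 / (m + 1)) hs (by positivity) (fun x hx => hx.2) (F m)
    rwa [Measure.restrict_apply_self] at this
  exact fun h0 => hm (le_zero_iff.1 (hFm.trans (h0 ▸ measure_mono fun x hx => hx.1)))

theorem le_dimH_of_eventually_measure_ball_le {E : Set X} {s : ℝ≥0}
    (hE : ∀ x ∈ E, ∀ᶠ r in 𝓝[>] 0, μ (ball x r) ≤ ENNReal.ofReal (r ^ (s : ℝ)))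
    (hμE : μ E ≠ 0) : (s : ℝ≥0∞) ≤ dimH E :=
  le_dimH_of_hausdorffMeasure_ne_zero
    (hausdorffMeasure_ne_zero_of_eventually_measure_ball_le s.2 hE hμE)

end MassDistribution

theorem stmt_8_general {X : Type*} [MetricSpace X] [MeasurableSpace X]
    [BorelSpace X] (μ : Measure X) [IsProbabilityMeasure μ]
    (Λ : Set X) (hΛpos : 0 < μ Λ) (a : ℝ)
    (H : ∀ x ∈ Λ, ∃ ρ : ℕ → ℝ,
      (∀ n, 0 < ρ n) ∧ Antitone ρ ∧
      Tendsto ρ atTop (nhds 0) ∧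
      Tendsto (fun n => Real.log (ρ (n + 1)) / Real.log (ρ n)) atTop (nhds 1) ∧
      a ≤ atTop.liminf
        (fun n => Real.log (μ (ball x (ρ n))).toReal / Real.log (ρ n))) :
    ENNReal.ofReal a ≤ ⨅ (Z : Set X) (_ : MeasurableSet Z) (_ : μ Z = 1), dimH Z := by
  refine le_iInf₂ fun Z hZ => le_iInf fun hμZ => ENNReal.le_of_forall_nnreal_lt fun q hq => ?_
  rcases eq_or_ne q 0 with rfl | hq0
  · simp
  have hqa : (q : ℝ) < a := ENNReal.coe_lt_ofReal.1 hq
  have hΛZ : μ (Λ ∩ Z) ≠ 0 := by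
    rw [measure_inter_conull ((prob_compl_eq_zero_iff hZ).2 hμZ)]
    exact hΛpos.ne'
  have hlocal : ∀ x ∈ Λ ∩ Z, ∀ᶠ r in 𝓝[>] 0, μ (ball x r) ≤ ENNReal.ofReal (r ^ (q : ℝ)) := by
    rintro x ⟨hxΛ, -⟩
    obtain ⟨ρ, hρpos, -, hρ0, hratio, ha⟩ := H x hxΛ
    obtain ⟨t, hqt, hta⟩ := exists_between hqa
    exact eventually_le_rpow_of_eventually_le_rpow_seq
      (fun r r' h => measure_mono (ball_subset_ball h)) hρpos hρ0 hratio
      (NNReal.coe_pos.2 (pos_iff_ne_zero.2 hq0))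
      hqt (eventually_measure_ball_le_rpow_of_lt_liminf hρpos hρ0 (hta.trans_le ha))
  calc (q : ℝ≥0∞) ≤ dimH (Λ ∩ Z) := le_dimH_of_eventually_measure_ball_le hlocal hΛZ
    _ ≤ dimH Z := dimH_mono inter_subset_right

/-- Young's lower bound for the dimension of a measure:
`dim_H(μ) := inf { dim_H Z : Z Borel, μ Z = 1 } ≥ a` as soon as some Borel set
of positive measure carries the pointwise local estimates. -/
theorem stmt_8 {X : Type*} [MetricSpace X] [CompactSpace X] [MeasurableSpace X]
    [BorelSpace X] (μ : Measure X) [IsProbabilityMeasure μ]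
    (Λ : Set X) (hΛ : MeasurableSet Λ) (hΛpos : 0 < μ Λ) (a : ℝ)
    (H : ∀ x ∈ Λ, ∃ ρ : ℕ → ℝ,
      (∀ n, 0 < ρ n) ∧ Antitone ρ ∧
      Tendsto ρ atTop (nhds 0) ∧
      Tendsto (fun n => Real.log (ρ (n + 1)) / Real.log (ρ n)) atTop (nhds 1) ∧
      a ≤ atTop.liminf
        (fun n => Real.log (μ (ball x (ρ n))).toReal / Real.log (ρ n))) :
    ENNReal.ofReal a ≤ ⨅ (Z : Set X) (_ : MeasurableSet Z) (_ : μ Z = 1), dimH Z :=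
  stmt_8_general μ Λ hΛpos a H
end

section
/- Let (X̂, f̂, μ̂) be an invertible ergodic measure-preserving system and let u : X̂ → (0,∞) satisfy log u ∈ L¹(μ̂) with χ := ∫ log u dμ̂. Fix ε > 0 and let p : X̂ → [1,∞) satisfy, for a.e. x̂ and all n ≥ 0, p(x̂)^{-1} e^{n(χ-ε/2)} ≤ ∏_{j=0}^n u(f̂^j(x̂)) ≤ p(x̂) e^{n(χ+ε/2)}, and for all n ≥ 1, ∏_{j=1}^n u(f̂^{-j}(x̂)) ≤ p(x̂) e^{n(χ+ε/2)}. Define V₂(x̂) := max{1, sup_{n≥1} ∏_{j=1}^n u(f̂^{-j}(x̂)) e^{-n(χ+ε/2)}}. Then for a.e. x̂ and every q ≥ 1, V₂(f̂^q(x̂)) ≤ p(x̂)² e^{qε} max{1, e^{-(χ+ε/2)}} V₂(x̂). -/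
open MeasureTheory Finset

private lemma gf_iter {X : Type*} {f g : X → X} (hgf : ∀ x, g (f x) = x) :
    ∀ (k : ℕ) (x : X), g^[k] (f^[k] x) = x := by
  intro k
  induction k with
  | zero => intro x; simp
  | succ k ih =>
    intro x
    rw [Function.iterate_succ_apply g, Function.iterate_succ_apply' f, hgf]
    exact ih x

private lemma gf_le {X : Type*} {f g : X → X} (hgf : ∀ x, g (f x) = x)
    {j q : ℕ} (h : j ≤ q) (x : X) : g^[j] (f^[q] x) = f^[q - j] x := by
  have h1 : f^[q] x = f^[j] (f^[q - j] x) := by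
    rw [← Function.iterate_add_apply]
    congr 1; omega
  rw [h1, gf_iter hgf]

private lemma gf_ge {X : Type*} {f g : X → X} (hgf : ∀ x, g (f x) = x)
    {j q : ℕ} (h : q ≤ j) (x : X) : g^[j] (f^[q] x) = g^[j - q] x := by
  have h1 : g^[j] (f^[q] x) = g^[j - q] (g^[q] (f^[q] x)) := by
    rw [← Function.iterate_add_apply]
    congr 1; omega
  rw [h1, gf_iter hgf]

private lemma Icc_one_eq_Ioc (k : ℕ) : Icc 1 k = Ioc 0 k := Finset.Icc_add_one_left_eq_Ioc 0 k

private lemma prod_shift {X : Type*} (u : X → ℝ) (f : X → X) (x : X)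
    {q N : ℕ} (h : N ≤ q) :
    ∏ j ∈ Icc 1 N, u (f^[q - j] x) = ∏ i ∈ range N, u (f^[(q - N) + i] x) := by
  rw [show Icc 1 N = Ico 1 (N + 1) from (Finset.Ico_add_one_right_eq_Icc 1 N).symm,
    Finset.prod_Ico_eq_prod_range]
  calc ∏ i ∈ range (N + 1 - 1), u (f^[q - (1 + i)] x)
      = ∏ i ∈ range N, u (f^[(q - N) + (N - 1 - i)] x) := by
        apply Finset.prod_congr (by congr 1)
        intro i hi
        simp only [Finset.mem_range] at hi
        congr 2
        omega
    _ = ∏ i ∈ range N, u (f^[(q - N) + i] x) :=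
        Finset.prod_range_reflect (fun i => u (f^[(q - N) + i] x)) N

private lemma prod_split_Ioc (F : ℕ → ℝ) {q n : ℕ} (h : q ≤ n) :
    ∏ j ∈ Icc 1 (n+1), F j = (∏ j ∈ Icc 1 q, F j) * ∏ j ∈ Ioc q (n+1), F j := by
  rw [Icc_one_eq_Ioc, Icc_one_eq_Ioc]
  exact (Finset.prod_Ioc_consecutive F (Nat.zero_le q) (by omega)).symm

private lemma prod_reindex_Ioc (G : ℕ → ℝ) {q n : ℕ} (h : q ≤ n) :
    ∏ j ∈ Ioc q (n+1), G (j - q) = ∏ j ∈ Icc 1 (n - q + 1), G j := by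
  have hmap : Finset.Ioc q (n+1) = Finset.map (addLeftEmbedding q) (Finset.Icc 1 (n - q + 1)) := by
    rw [Finset.map_add_left_Icc, show q + (n - q + 1) = n + 1 from by omega,
      Finset.Icc_add_one_left_eq_Ioc]
  rw [hmap, Finset.prod_map]
  apply Finset.prod_congr rfl
  intro j hj
  simp only [addLeftEmbedding_apply]
  congr 1
  omega

/-- Computational core of the `ε`-fast property of `V₂`: the supremum defining
`V₂` shifts under `f̂^q` by at most `p(x̂)² e^{qε} max{1, e^{-(χ+ε/2)}}`. -/
theorem stmt_19 {X : Type*} [MeasurableSpace X]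
    (μ : Measure X) [IsProbabilityMeasure μ]
    (f g : X → X) (hf : MeasurePreserving f μ μ) (hg : MeasurePreserving g μ μ)
    (hfg : ∀ x, f (g x) = x) (hgf : ∀ x, g (f x) = x)
    (herg : Ergodic f μ)
    (u : X → ℝ) (hu : Measurable u) (hupos : ∀ x, 0 < u x)
    (hlog : Integrable (fun x => Real.log (u x)) μ)
    (χ : ℝ) (hχ : χ = ∫ x, Real.log (u x) ∂μ)
    (ε : ℝ) (hε : 0 < ε)
    (p : X → ℝ) (hp1 : ∀ x, 1 ≤ p x)
    (hforward : ∀ᵐ x ∂μ, ∀ n : ℕ,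
      (p x)⁻¹ * Real.exp (n * (χ - ε / 2)) ≤ ∏ j ∈ Finset.range (n + 1), u (f^[j] x) ∧
      ∏ j ∈ Finset.range (n + 1), u (f^[j] x) ≤ p x * Real.exp (n * (χ + ε / 2)))
    (hbackward : ∀ᵐ x ∂μ, ∀ n : ℕ, 1 ≤ n →
      ∏ j ∈ Finset.Icc 1 n, u (g^[j] x) ≤ p x * Real.exp (n * (χ + ε / 2)))
    (V₂ : X → ℝ)
    (hV₂ : ∀ x, V₂ x = max 1 (⨆ n : ℕ,
      (∏ j ∈ Finset.Icc 1 (n + 1), u (g^[j] x)) *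
        Real.exp (-(((n : ℝ) + 1) * (χ + ε / 2))))) :
    ∀ᵐ x ∂μ, ∀ q : ℕ, 1 ≤ q →
      V₂ (f^[q] x) ≤
        (p x) ^ 2 * Real.exp (q * ε) * max 1 (Real.exp (-(χ + ε / 2))) * V₂ x := by
  filter_upwards [hforward, hbackward] with x hfx hbx
  intro q hq
  set c : ℝ := χ + ε / 2 with hc
  have hppos : (0 : ℝ) < p x := lt_of_lt_of_le one_pos (hp1 x)
  have hexpq : (1 : ℝ) ≤ Real.exp (q * ε) := by
    rw [← Real.exp_zero]
    exact Real.exp_le_exp.2 (by positivity)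
  have hmax1 : (1 : ℝ) ≤ max 1 (Real.exp (-c)) := le_max_left _ _
  have hmaxpos : (0 : ℝ) < max 1 (Real.exp (-c)) := lt_of_lt_of_le one_pos hmax1
  have hp2 : (1 : ℝ) ≤ p x ^ 2 := one_le_pow₀ (hp1 x)
  have hC1 : 1 ≤ p x ^ 2 * Real.exp (q * ε) * max 1 (Real.exp (-c)) := by
    calc (1:ℝ) = 1 * 1 * 1 := by norm_num
      _ ≤ p x ^ 2 * Real.exp (q * ε) * max 1 (Real.exp (-c)) := by
          apply mul_le_mul (mul_le_mul hp2 hexpq zero_le_one (by positivity)) hmax1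
            zero_le_one (by positivity)
  have hCpos : 0 < p x ^ 2 * Real.exp (q * ε) * max 1 (Real.exp (-c)) :=
    lt_of_lt_of_le one_pos hC1
  have hV1 : 1 ≤ V₂ x := by rw [hV₂]; exact le_max_left _ _
  have hVpos : 0 < V₂ x := lt_of_lt_of_le one_pos hV1
  -- each term in the sup at x is ≤ p x
  have hterm : ∀ k : ℕ,
      (∏ j ∈ Finset.Icc 1 (k + 1), u (g^[j] x)) * Real.exp (-(((k : ℝ) + 1) * c)) ≤ p x := by
    intro k
    have hb := hbx (k + 1) (by omega)
    have h1 : (∏ j ∈ Finset.Icc 1 (k + 1), u (g^[j] x)) * Real.exp (-(((k : ℝ) + 1) * c))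
        ≤ (p x * Real.exp ((((k : ℕ) + 1 : ℕ) : ℝ) * c)) * Real.exp (-(((k : ℝ) + 1) * c)) :=
      mul_le_mul_of_nonneg_right hb (Real.exp_nonneg _)
    refine h1.trans (le_of_eq ?_)
    rw [mul_assoc, ← Real.exp_add]
    push_cast
    ring_nf
    simp
  have hbdd : BddAbove (Set.range fun k : ℕ =>
      (∏ j ∈ Finset.Icc 1 (k + 1), u (g^[j] x)) * Real.exp (-(((k : ℝ) + 1) * c))) := by
    refine ⟨p x, ?_⟩
    rintro _ ⟨k, rfl⟩
    exact hterm k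
  have hsup_le : (⨆ k : ℕ,
      (∏ j ∈ Finset.Icc 1 (k + 1), u (g^[j] x)) * Real.exp (-(((k : ℝ) + 1) * c))) ≤ V₂ x := by
    rw [hV₂]; exact le_max_right _ _
  -- bounds on forward products Π(m) = ∏_{j<m} u(f^j x)
  have hPi_pos : ∀ m : ℕ, (0 : ℝ) < ∏ j ∈ Finset.range m, u (f^[j] x) :=
    fun m => Finset.prod_pos fun j _ => hupos _
  have hPi_upper : ∏ j ∈ Finset.range q, u (f^[j] x)
      ≤ p x * Real.exp (((q - 1 : ℕ) : ℝ) * c) := by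
    have := (hfx (q - 1)).2
    rwa [show q - 1 + 1 = q from by omega] at this
  have hPi_lower : ∀ m : ℕ,
      (p x)⁻¹ * Real.exp (((m - 1 : ℕ) : ℝ) * (χ - ε / 2))
        ≤ ∏ j ∈ Finset.range m, u (f^[j] x) := by
    intro m
    match m with
    | 0 =>
      simp only [Finset.range_zero, Finset.prod_empty]
      simp only [Nat.zero_sub, Nat.cast_zero, zero_mul, Real.exp_zero, mul_one]
      exact inv_le_one_of_one_le₀ (hp1 x)
    | Nat.succ k =>
      have := (hfx k).1
      simpa using this
  rw [hV₂ (f^[q] x)]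
  apply max_le
  · calc (1 : ℝ) ≤ p x ^ 2 * Real.exp (q * ε) * max 1 (Real.exp (-c)) := hC1
      _ = p x ^ 2 * Real.exp (q * ε) * max 1 (Real.exp (-c)) * 1 := (mul_one _).symm
      _ ≤ _ := mul_le_mul_of_nonneg_left hV1 hCpos.le
  · apply ciSup_le
    intro n
    by_cases hcase : n + 1 ≤ q
    · -- pure forward case
      have hrw : ∏ j ∈ Finset.Icc 1 (n + 1), u (g^[j] (f^[q] x))
          = ∏ j ∈ Finset.Icc 1 (n + 1), u (f^[q - j] x) := by
        apply Finset.prod_congr rfl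
        intro j hj
        rw [Finset.mem_Icc] at hj
        rw [gf_le hgf (by omega) x]
      rw [hrw, prod_shift u f x hcase]
      set m := q - (n + 1) with hm
      have hsplit : (∏ j ∈ Finset.range m, u (f^[j] x))
          * (∏ i ∈ Finset.range (n + 1), u (f^[m + i] x))
          = ∏ j ∈ Finset.range q, u (f^[j] x) := by
        have h0 := Finset.prod_range_add (fun j => u (f^[j] x)) m (n + 1)
        rw [show m + (n + 1) = q from by omega] at h0
        exact h0.symm
      have hP : ∏ i ∈ Finset.range (n + 1), u (f^[m + i] x)
          = (∏ j ∈ Finset.range q, u (f^[j] x)) / ∏ j ∈ Finset.range m, u (f^[j] x) := by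
        rw [eq_div_iff (hPi_pos m).ne', mul_comm]
        exact hsplit
      have hP_le : ∏ i ∈ Finset.range (n + 1), u (f^[m + i] x)
          ≤ (p x * Real.exp (((q - 1 : ℕ) : ℝ) * c))
            / ((p x)⁻¹ * Real.exp (((m - 1 : ℕ) : ℝ) * (χ - ε / 2))) := by
        rw [hP]
        apply div_le_div₀ (by positivity) hPi_upper (by positivity) (hPi_lower m)
      have hkey : (∏ i ∈ Finset.range (n + 1), u (f^[m + i] x))
          * Real.exp (-(((n : ℝ) + 1) * c))
          ≤ p x ^ 2 * Real.exp ((((q - 1 : ℕ) : ℝ) * c)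
              - (((m - 1 : ℕ) : ℝ) * (χ - ε / 2)) - ((n : ℝ) + 1) * c) := by
        have h2 := mul_le_mul_of_nonneg_right hP_le (Real.exp_nonneg (-(((n : ℝ) + 1) * c)))
        refine h2.trans (le_of_eq ?_)
        rw [Real.exp_sub, Real.exp_sub, Real.exp_neg]
        field_simp
      have hexp_le : Real.exp ((((q - 1 : ℕ) : ℝ) * c)
          - (((m - 1 : ℕ) : ℝ) * (χ - ε / 2)) - ((n : ℝ) + 1) * c)
          ≤ Real.exp (q * ε) * max 1 (Real.exp (-c)) := by
        by_cases hc2 : n + 1 < q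
        · -- m ≥ 1
          have e1 : (((q - 1 : ℕ) : ℝ)) = (q : ℝ) - 1 := by
            push_cast [Nat.cast_sub (by omega : 1 ≤ q)]; ring
          have e2 : (((m - 1 : ℕ) : ℝ)) = (q : ℝ) - (n : ℝ) - 2 := by
            have : m - 1 = q - n - 2 := by omega
            rw [this]
            push_cast [Nat.cast_sub (by omega : 2 ≤ q - n), Nat.cast_sub (by omega : n ≤ q)]
            ring
          rw [e1, e2]
          have harg : ((q : ℝ) - 1) * c - ((q : ℝ) - (n : ℝ) - 2) * (χ - ε / 2)
              - ((n : ℝ) + 1) * c = ((q : ℝ) - (n : ℝ) - 2) * ε := by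
            rw [hc]; ring
          rw [harg]
          calc Real.exp (((q : ℝ) - (n : ℝ) - 2) * ε) ≤ Real.exp ((q : ℝ) * ε) := by
                apply Real.exp_le_exp.2
                have : ((q : ℝ) - (n : ℝ) - 2) ≤ (q : ℝ) := by
                  have : (0 : ℝ) ≤ (n : ℝ) := Nat.cast_nonneg n
                  linarith
                nlinarith
            _ ≤ Real.exp ((q : ℝ) * ε) * max 1 (Real.exp (-c)) := by
                nlinarith [Real.exp_pos ((q : ℝ) * ε)]
        · -- n + 1 = q, m = 0
          have hnq : n + 1 = q := by omega
          have hm0 : m = 0 := by omega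
          have e1 : (((q - 1 : ℕ) : ℝ)) = (n : ℝ) := by
            rw [show q - 1 = n from by omega]
          rw [e1, hm0]
          simp only [Nat.zero_sub, Nat.cast_zero, zero_mul, sub_zero]
          have harg : (n : ℝ) * c - ((n : ℝ) + 1) * c = -c := by ring
          rw [harg]
          calc Real.exp (-c) ≤ max 1 (Real.exp (-c)) := le_max_right _ _
            _ = 1 * max 1 (Real.exp (-c)) := (one_mul _).symm
            _ ≤ Real.exp ((q : ℝ) * ε) * max 1 (Real.exp (-c)) :=
                mul_le_mul_of_nonneg_right hexpq hmaxpos.le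
      calc (∏ i ∈ Finset.range (n + 1), u (f^[m + i] x)) * Real.exp (-(((n : ℝ) + 1) * c))
          ≤ p x ^ 2 * Real.exp ((((q - 1 : ℕ) : ℝ) * c)
              - (((m - 1 : ℕ) : ℝ) * (χ - ε / 2)) - ((n : ℝ) + 1) * c) := hkey
        _ ≤ p x ^ 2 * (Real.exp (q * ε) * max 1 (Real.exp (-c))) :=
            mul_le_mul_of_nonneg_left hexp_le (by positivity)
        _ = p x ^ 2 * Real.exp (q * ε) * max 1 (Real.exp (-c)) * 1 := by ring
        _ ≤ p x ^ 2 * Real.exp (q * ε) * max 1 (Real.exp (-c)) * V₂ x :=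
            mul_le_mul_of_nonneg_left hV1 hCpos.le
    · -- mixed case: q ≤ n
      have hqn : q ≤ n := by omega
      have hrw : ∏ j ∈ Finset.Icc 1 (n + 1), u (g^[j] (f^[q] x))
          = (∏ j ∈ Finset.range q, u (f^[j] x))
            * ∏ j ∈ Finset.Icc 1 (n - q + 1), u (g^[j] x) := by
        rw [prod_split_Ioc (fun j => u (g^[j] (f^[q] x))) hqn]
        congr 1
        · rw [show (∏ j ∈ Finset.Icc 1 q, u (g^[j] (f^[q] x)))
              = ∏ j ∈ Finset.Icc 1 q, u (f^[q - j] x) from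
            Finset.prod_congr rfl fun j hj => by
              rw [Finset.mem_Icc] at hj
              rw [gf_le hgf hj.2 x]]
          rw [prod_shift u f x (le_refl q)]
          simp
        · rw [show (∏ j ∈ Finset.Ioc q (n + 1), u (g^[j] (f^[q] x)))
              = ∏ j ∈ Finset.Ioc q (n + 1), u (g^[j - q] x) from
            Finset.prod_congr rfl fun j hj => by
              rw [Finset.mem_Ioc] at hj
              rw [gf_ge hgf (le_of_lt hj.1) x]]
          exact prod_reindex_Ioc (fun j => u (g^[j] x)) hqn
      rw [hrw]
      have hesplit : Real.exp (-(((n : ℝ) + 1) * c))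
          = Real.exp (-((q : ℝ) * c)) * Real.exp (-((((n - q : ℕ) : ℝ) + 1) * c)) := by
        rw [← Real.exp_add]
        congr 1
        push_cast [Nat.cast_sub hqn]
        ring
      rw [hesplit]
      have hfac1 : (∏ j ∈ Finset.range q, u (f^[j] x)) * Real.exp (-((q : ℝ) * c))
          ≤ p x * Real.exp (-c) := by
        have h1 := mul_le_mul_of_nonneg_right hPi_upper (Real.exp_nonneg (-((q : ℝ) * c)))
        refine h1.trans (le_of_eq ?_)
        rw [mul_assoc, ← Real.exp_add]
        congr 2
        push_cast [Nat.cast_sub (by omega : 1 ≤ q)]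
        ring
      have hfac2 : (∏ j ∈ Finset.Icc 1 (n - q + 1), u (g^[j] x))
          * Real.exp (-((((n - q : ℕ) : ℝ) + 1) * c)) ≤ V₂ x :=
        (le_ciSup hbdd (n - q)).trans hsup_le
      have hfac2_pos : (0 : ℝ) ≤ (∏ j ∈ Finset.Icc 1 (n - q + 1), u (g^[j] x))
          * Real.exp (-((((n - q : ℕ) : ℝ) + 1) * c)) := by
        have : (0 : ℝ) < ∏ j ∈ Finset.Icc 1 (n - q + 1), u (g^[j] x) :=
          Finset.prod_pos fun j _ => hupos _
        positivity
      calc ((∏ j ∈ Finset.range q, u (f^[j] x))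
            * ∏ j ∈ Finset.Icc 1 (n - q + 1), u (g^[j] x))
            * (Real.exp (-((q : ℝ) * c)) * Real.exp (-((((n - q : ℕ) : ℝ) + 1) * c)))
          = ((∏ j ∈ Finset.range q, u (f^[j] x)) * Real.exp (-((q : ℝ) * c)))
            * ((∏ j ∈ Finset.Icc 1 (n - q + 1), u (g^[j] x))
              * Real.exp (-((((n - q : ℕ) : ℝ) + 1) * c))) := by ring
        _ ≤ (p x * Real.exp (-c)) * V₂ x :=
            mul_le_mul hfac1 hfac2 hfac2_pos
              (mul_nonneg hppos.le (Real.exp_nonneg _))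
        _ ≤ p x ^ 2 * Real.exp (q * ε) * max 1 (Real.exp (-c)) * V₂ x := by
            apply mul_le_mul_of_nonneg_right _ hVpos.le
            calc p x * Real.exp (-c)
                  ≤ p x * max 1 (Real.exp (-c)) :=
                    mul_le_mul_of_nonneg_left (le_max_right _ _) hppos.le
              _ ≤ p x ^ 2 * max 1 (Real.exp (-c)) :=
                    mul_le_mul_of_nonneg_right (le_self_pow₀ (hp1 x) two_ne_zero) hmaxpos.le
              _ = p x ^ 2 * 1 * max 1 (Real.exp (-c)) := by ring
              _ ≤ p x ^ 2 * Real.exp (q * ε) * max 1 (Real.exp (-c)) := by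
                  apply mul_le_mul_of_nonneg_right _ hmaxpos.le
                  exact mul_le_mul_of_nonneg_left hexpq (by positivity)
end
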